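/- Cassini's identity for the Modified third-order Jacobsthal sequence: for all n ≥ 1, K₃(n+1)·K₃(n−1) − (K₃(n))² = 2^(n−1)·(3·M(n+2) − 5·M(n)) − 3, where M(m) = 2 if m ≡ 0 (mod 3) and M(m) = −1 otherwise. -/
import Mathlib


def K3 : ℕ → ℤ
  | 0 => 3
  | 1 => 1
  | 2 => 3
  | n + 3 => K3 (n + 2) + K3 (n + 1) + 2 * K3 n

def M (m : ℕ) : ℤ := if m % 3 = 0 then 2 else -1

lemma M_add3 (n : ℕ) : M (n + 3) = M n := by
  simp [M, Nat.add_mod]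

lemma K3_closed : ∀ n : ℕ, K3 n = 2 ^ n + M n := by
  have key : ∀ n : ℕ, K3 n = 2 ^ n + M n ∧ K3 (n+1) = 2 ^ (n+1) + M (n+1) ∧
      K3 (n+2) = 2 ^ (n+2) + M (n+2) := by
    intro n
    induction n with
    | zero => refine ⟨?_, ?_, ?_⟩ <;> simp [K3, M]
    | succ k ih =>
      obtain ⟨h0, h1, h2⟩ := ih
      refine ⟨h1, h2, ?_⟩
      show K3 (k + 3) = _
      rw [K3, h0, h1, h2, M_add3]
      have : M k + M (k+1) + M (k+2) = 0 := by
        have hm : k % 3 = 0 ∨ k % 3 = 1 ∨ k % 3 = 2 := by omega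
        rcases hm with h | h | h <;>
          simp [M, Nat.add_mod, h]
      linear_combination this
  exact fun n => (key n).1

theorem stmt17 : ∀ n : ℕ, 1 ≤ n →
    K3 (n + 1) * K3 (n - 1) - (K3 n) ^ 2 =
      2 ^ (n - 1) * (3 * M (n + 2) - 5 * M n) - 3 := by
  rintro (_ | m) hn
  · omega
  · simp only [Nat.add_sub_cancel]
    rw [K3_closed, K3_closed, K3_closed]
    have hm : m % 3 = 0 ∨ m % 3 = 1 ∨ m % 3 = 2 := by omega
    rcases hm with h | h | h <;>
      simp [M, Nat.add_mod, h] <;> ring
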